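/- (Theorem 1, optimality at α = 0.) Let Q be an N×U real matrix with nonnegative entries, let Z_1,…,Z_M : ℝ^U → ℝ be monotone on componentwise-nonnegative vectors, and assume Q̃(A_root) − Q̃(A_null) > 0. Let O be a finite nonempty set of M×N allocation matrices (entries 0 or 1) such that every M×N allocation matrix (entries 0 or 1) either belongs to O or is ≤ some element of O entrywise, and let Â be an M×N allocation matrix (entries 0 or 1) with f_NAC(Â) ≤ f_NAC(P) for every P ∈ O. Then Q̃(A) ≤ Q̃(Â) for every M×N allocation matrix A (entries 0 or 1); that is, the returned solution achieves the optimal total allocation efficacy. -/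
import Mathlib


/-- A binary allocation matrix: every entry is 0 or 1. -/
def IsAlloc {M N : ℕ} (A : Matrix (Fin M) (Fin N) ℝ) : Prop :=
  ∀ i j, A i j = 0 ∨ A i j = 1

/-- A trait-efficacy map is monotone on componentwise-nonnegative vectors. -/
def MonotoneEff {U : ℕ} (Z : (Fin U → ℝ) → ℝ) : Prop :=
  ∀ x y : Fin U → ℝ, (∀ u, 0 ≤ x u) → (∀ u, 0 ≤ y u) → (∀ u, x u ≤ y u) → Z x ≤ Z y

/-- Total allocation efficacy: `Q̃(A) = ∑ m, Z m ((A ⬝ Q) m)`. -/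
noncomputable def totalEff {M N U : ℕ} (Q : Matrix (Fin N) (Fin U) ℝ)
    (Z : Fin M → (Fin U → ℝ) → ℝ) (A : Matrix (Fin M) (Fin N) ℝ) : ℝ :=
  ∑ m, Z m ((A * Q) m)

/-- The all-ones (root) allocation. -/
def Aroot (M N : ℕ) : Matrix (Fin M) (Fin N) ℝ := fun _ _ => 1

/-- The all-zeros (null) allocation. -/
def Anull (M N : ℕ) : Matrix (Fin M) (Fin N) ℝ := fun _ _ => 0

/-- Normalized Allocation Cost. -/
noncomputable def fNAC {M N U : ℕ} (Q : Matrix (Fin N) (Fin U) ℝ)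
    (Z : Fin M → (Fin U → ℝ) → ℝ) (A : Matrix (Fin M) (Fin N) ℝ) : ℝ :=
  (totalEff Q Z (Aroot M N) - totalEff Q Z A) /
    (totalEff Q Z (Aroot M N) - totalEff Q Z (Anull M N))

/-- aux -/
lemma alloc_nonneg {M N : ℕ} {A : Matrix (Fin M) (Fin N) ℝ} (hA : IsAlloc A)
    (i : Fin M) (j : Fin N) : 0 ≤ A i j := by
  rcases hA i j with h | h <;> simp [h]

lemma totalEff_mono {M N U : ℕ} (Q : Matrix (Fin N) (Fin U) ℝ) (hQ : ∀ i u, 0 ≤ Q i u)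
    (Z : Fin M → (Fin U → ℝ) → ℝ) (hZ : ∀ m, MonotoneEff (Z m))
    {A B : Matrix (Fin M) (Fin N) ℝ} (hA : IsAlloc A) (hB : IsAlloc B)
    (hle : ∀ i j, A i j ≤ B i j) : totalEff Q Z A ≤ totalEff Q Z B := by
  unfold totalEff
  apply Finset.sum_le_sum
  intro m _
  apply hZ m
  · intro u
    simp only [Matrix.mul_apply]
    exact Finset.sum_nonneg fun j _ => mul_nonneg (alloc_nonneg hA m j) (hQ j u)
  · intro u
    simp only [Matrix.mul_apply]
    exact Finset.sum_nonneg fun j _ => mul_nonneg (alloc_nonneg hB m j) (hQ j u)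
  · intro u
    simp only [Matrix.mul_apply]
    exact Finset.sum_le_sum fun j _ => mul_le_mul_of_nonneg_right (hle m j) (hQ j u)

theorem eitags_optimal_at_alpha_zero {M N U : ℕ}
    (Q : Matrix (Fin N) (Fin U) ℝ) (hQ : ∀ i u, 0 ≤ Q i u)
    (Z : Fin M → (Fin U → ℝ) → ℝ) (hZ : ∀ m, MonotoneEff (Z m))
    (hD : 0 < totalEff Q Z (Aroot M N) - totalEff Q Z (Anull M N))
    (Op : Finset (Matrix (Fin M) (Fin N) ℝ)) (hOp : Op.Nonempty)
    (hOpAlloc : ∀ P ∈ Op, IsAlloc P)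
    (hcover : ∀ A : Matrix (Fin M) (Fin N) ℝ, IsAlloc A →
      A ∈ Op ∨ ∃ P ∈ Op, ∀ i j, A i j ≤ P i j)
    (Ahat : Matrix (Fin M) (Fin N) ℝ) (hAhat : IsAlloc Ahat)
    (hgreedy : ∀ P ∈ Op, fNAC Q Z Ahat ≤ fNAC Q Z P)
    (A : Matrix (Fin M) (Fin N) ℝ) (hA : IsAlloc A) :
    totalEff Q Z A ≤ totalEff Q Z Ahat := by
  have key : ∀ P ∈ Op, totalEff Q Z P ≤ totalEff Q Z Ahat := by
    intro P hP
    have h := hgreedy P hP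
    unfold fNAC at h
    have := (div_le_div_iff_of_pos_right hD).mp h
    linarith
  rcases hcover A hA with hmem | ⟨P, hP, hle⟩
  · exact key A hmem
  · exact le_trans (totalEff_mono Q hQ Z hZ hA (hOpAlloc P hP) hle) (key P hP)
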